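/- Solvability of the implicit Euler step of the angular sub-problem: for every Δt ≥ 0, the operator I + Δt K_σ is a bijection of L²(Ω × S²) onto itself; that is, for every g ∈ L²(Ω × S²) there exists a unique ũ ∈ L²(Ω × S²) with ũ + Δt K_σ ũ = g. -/

import Mathlib

open MeasureTheory Metric Real
open scoped ENNReal RealInnerProductSpace

noncomputable section

/-- The ambient Euclidean space `ℝ³`. -/
abbrev E3 := EuclideanSpace ℝ (Fin 3)

/-- The unit sphere `S² ⊆ ℝ³`. -/
abbrev S2 := Metric.sphere (0 : E3) 1

/-- The surface measure on the unit sphere `S²`. -/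
def sphereMeasure : Measure S2 := (volume : Measure E3).toSphere

/-- The scattering operator `(Kv)(x,s) = ∫_{S²} Φ(s,s') v(x,s') dσ(s')`. -/
def scatK (Φ : S2 → S2 → ℝ) (v : E3 × S2 → ℝ) : E3 × S2 → ℝ :=
  fun p => ∫ s', Φ p.2 s' * v (p.1, s') ∂sphereMeasure

/-- The product measure on `Ω × S²` (Lebesgue measure restricted to `Ω` times the
surface measure on `S²`). -/
def rteMeasure (Ω : Set E3) : Measure (E3 × S2) :=
  ((volume : Measure E3).restrict Ω).prod sphereMeasure

/-- The removal operator `(K_σ v)(x,s) = σ_a(x) v(x,s) + σ_s(x) (v(x,s) - (Kv)(x,s))`. -/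
def removalK (Φ : S2 → S2 → ℝ) (σa σs : E3 → ℝ) (v : E3 × S2 → ℝ) : E3 × S2 → ℝ :=
  fun p => σa p.1 * v p + σs p.1 * (v p - scatK Φ v p)

/-!
Since `K_σ = (σ_a + σ_s) - σ_s K`, the equation `ũ + Δt K_σ ũ = g` says that `ũ` is a fixed point
of `v ↦ (g + Δt σ_s K v) / (1 + Δt (σ_a + σ_s))`. Each `Φ(s, ·)` is a probability density, so
Jensen's inequality bounds `|K v|²` by the `Φ(s, ·)`-average of `|v|²`, and by symmetry of `Φ`
Tonelli turns the integral of that average back into `‖v‖²`: `K` is an `L²` contraction. Hence the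
map above is a contraction of `L²(Ω × S²)` with constant `Δt σ̄_s / (1 + Δt σ̄_s) < 1`, and the
Banach fixed-point theorem gives existence and uniqueness.
-/

open scoped NNReal

instance : IsFiniteMeasure sphereMeasure := by unfold sphereMeasure; infer_instance

theorem ae_prod_fst_of_ae {α β : Type*} [MeasurableSpace α] [MeasurableSpace β] {μ : Measure α}
    {ν : Measure β} {P : α → Prop} (h : ∀ᵐ x ∂μ, P x) : ∀ᵐ p ∂(μ.prod ν), P p.1 :=
  Measure.quasiMeasurePreserving_fst.ae h

section ContractionLp

variable {α E : Type*} [MeasurableSpace α] {μ : Measure α} [NormedAddCommGroup E]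
  [CompleteSpace E] {p : ℝ≥0∞} [Fact (1 ≤ p)]

theorem exists_memLp_ae_fixedPoint_of_contraction {T : (α → E) → α → E} {K : ℝ≥0}
    (hK : K < 1) (hT : ∀ u, MemLp u p μ → MemLp (T u) p μ)
    (hT_lip : ∀ u v, MemLp u p μ → MemLp v p μ →
      eLpNorm (T u - T v) p μ ≤ K * eLpNorm (u - v) p μ) :
    ∃ u, MemLp u p μ ∧ T u =ᵐ[μ] u ∧ ∀ v, MemLp v p μ → T v =ᵐ[μ] v → v =ᵐ[μ] u := by
  set F : Lp E p μ → Lp E p μ := fun u => (hT u (Lp.memLp u)).toLp (T u)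
  have hF : ContractingWith K F := ⟨hK, fun u v => by
    rw [Lp.edist_toLp_toLp, Lp.edist_def]
    exact hT_lip u v (Lp.memLp u) (Lp.memLp v)⟩
  obtain ⟨u, hu⟩ : ∃ u, F u = u := ⟨_, hF.fixedPoint_isFixedPt⟩
  have hTu : T u =ᵐ[μ] u :=
    calc T u =ᵐ[μ] F u := (MemLp.coeFn_toLp _).symm
      _ = u := by rw [hu]
  refine ⟨u, Lp.memLp u, hTu, fun v hv hTv => ?_⟩
  have hvu : MemLp (v - ⇑u) p μ := hv.sub (Lp.memLp u)
  have hle : 1 * eLpNorm (v - ⇑u) p μ ≤ K * eLpNorm (v - ⇑u) p μ :=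
    calc 1 * eLpNorm (v - ⇑u) p μ = eLpNorm (T v - T ⇑u) p μ := by
          rw [one_mul]; exact eLpNorm_congr_ae (hTv.symm.sub hTu.symm)
      _ ≤ K * eLpNorm (v - ⇑u) p μ := hT_lip v u hv (Lp.memLp u)
  have hzero : eLpNorm (v - ⇑u) p μ = 0 := by
    by_contra h0
    exact (ENNReal.coe_lt_one_iff.mpr hK).not_ge
      ((ENNReal.mul_le_mul_iff_left h0 hvu.eLpNorm_ne_top).mp hle)
  rw [eLpNorm_eq_zero_iff hvu.1 (zero_lt_one.trans_le Fact.out).ne'] at hzero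
  exact hzero.mono fun x hx => sub_eq_zero.mp hx

end ContractionLp

section MarkovDensity

variable {α : Type*} [MeasurableSpace α] {ν : Measure α}

structure IsSymmetricMarkovDensity (ν : Measure α) (Φ : α → α → ℝ) : Prop where
  measurable : Measurable (Function.uncurry Φ)
  nonneg : ∀ s s', 0 ≤ Φ s s'
  symm : ∀ s s', Φ s s' = Φ s' s
  integral_eq_one : ∀ s, ∫ s', Φ s s' ∂ν = 1

theorem lintegral_ofReal_eq_one_of_integral_eq_one {F : α → ℝ} (hF : 0 ≤ F)
    (h : ∫ y, F y ∂ν = 1) : ∫⁻ y, ENNReal.ofReal (F y) ∂ν = 1 := by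
  have hint : Integrable F ν := by
    by_contra hF'
    simp [integral_undef hF'] at h
  rw [← ofReal_integral_eq_lintegral_ofReal hint (.of_forall hF), h, ENNReal.ofReal_one]

theorem sq_lintegral_mul_le_lintegral_mul_sq {F f : α → ℝ≥0∞} (hF : AEMeasurable F ν)
    (hf : AEMeasurable f ν) (hF1 : ∫⁻ y, F y ∂ν = 1) :
    (∫⁻ y, F y * f y ∂ν) ^ (2 : ℝ) ≤ ∫⁻ y, F y * f y ^ (2 : ℝ) ∂ν := by
  have : IsProbabilityMeasure (ν.withDensity F) :=
    ⟨by rw [withDensity_apply _ MeasurableSet.univ, Measure.restrict_univ, hF1]⟩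
  have h := eLpNorm'_le_eLpNorm'_of_exponent_le one_pos one_le_two (ν.withDensity F)
    (hf.mono_ac (withDensity_absolutelyContinuous ν F)).aestronglyMeasurable
  simp only [eLpNorm', enorm_eq_self, ENNReal.rpow_one, div_one] at h
  rw [lintegral_withDensity_eq_lintegral_mul₀ hF hf,
    lintegral_withDensity_eq_lintegral_mul₀ hF (hf.pow_const _)] at h
  calc (∫⁻ y, F y * f y ∂ν) ^ (2 : ℝ)
      ≤ ((∫⁻ y, F y * f y ^ (2 : ℝ) ∂ν) ^ (1 / 2 : ℝ)) ^ (2 : ℝ) := by gcongr; exact h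
    _ = _ := by rw [← ENNReal.rpow_mul]; norm_num

namespace IsSymmetricMarkovDensity

variable {Φ : α → α → ℝ}

theorem lintegral_ofReal_eq_one (hΦ : IsSymmetricMarkovDensity ν Φ) (s : α) :
    ∫⁻ s', ENNReal.ofReal (Φ s s') ∂ν = 1 :=
  lintegral_ofReal_eq_one_of_integral_eq_one (hΦ.nonneg s) (hΦ.integral_eq_one s)

theorem lintegral_lintegral_mul [SFinite ν] (hΦ : IsSymmetricMarkovDensity ν Φ) {h : α → ℝ≥0∞}
    (hh : Measurable h) :
    ∫⁻ s, ∫⁻ s', ENNReal.ofReal (Φ s s') * h s' ∂ν ∂ν = ∫⁻ s', h s' ∂ν := by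
  rw [lintegral_lintegral_swap
    (hΦ.measurable.ennreal_ofReal.mul (hh.comp measurable_snd)).aemeasurable]
  refine lintegral_congr fun s' => ?_
  rw [lintegral_mul_const _ hΦ.measurable.of_uncurry_right.ennreal_ofReal]
  simp_rw [hΦ.symm _ s', hΦ.lintegral_ofReal_eq_one, one_mul]

end IsSymmetricMarkovDensity

end MarkovDensity

theorem abs_add_mul_div_one_add_le {Δt a s x y : ℝ} (hΔt : 0 ≤ Δt) (ha : 0 ≤ a) (hs : 0 ≤ s) :
    |(x + Δt * s * y) / (1 + Δt * (a + s))| ≤ |x| + |y| := by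
  have hm : 1 ≤ 1 + Δt * (a + s) := by nlinarith [mul_nonneg hΔt ha, mul_nonneg hΔt hs]
  rw [abs_div, abs_of_pos (show 0 < 1 + Δt * (a + s) by linarith), div_le_iff₀ (by linarith)]
  calc |x + Δt * s * y| ≤ |x| + Δt * s * |y| := (abs_add_le _ _).trans_eq
        (by rw [abs_mul, abs_of_nonneg (mul_nonneg hΔt hs)])
    _ ≤ (|x| + |y|) * (1 + Δt * (a + s)) := by
        nlinarith [abs_nonneg x, abs_nonneg y, mul_nonneg hΔt ha, mul_nonneg hΔt hs]

theorem mul_div_one_add_mul_le {Δt a s S : ℝ} (hΔt : 0 ≤ Δt) (ha : 0 ≤ a) (hs : 0 ≤ s)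
    (hsS : s ≤ S) : Δt * s / (1 + Δt * (a + s)) ≤ Δt * S / (1 + Δt * S) := by
  rw [div_le_div_iff₀ (by positivity) (by nlinarith)]
  nlinarith [mul_nonneg (mul_nonneg hΔt hΔt) (mul_nonneg ha (hs.trans hsS)),
    mul_le_mul_of_nonneg_left hsS hΔt]

section Scattering

variable {Φ : S2 → S2 → ℝ} {ρ : Measure E3} {v w : E3 × S2 → ℝ}

theorem measurable_scatK (hΦ : Measurable (Function.uncurry Φ)) (hv : Measurable v) :
    Measurable (scatK Φ v) :=
  ((hΦ.comp (measurable_fst.snd.prodMk measurable_snd)).mul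
    (hv.comp (measurable_fst.fst.prodMk measurable_snd))).stronglyMeasurable
    |>.integral_prod_right'.measurable

theorem scatK_ae_eq_of_ae_eq (h : v =ᵐ[ρ.prod sphereMeasure] w) :
    scatK Φ v =ᵐ[ρ.prod sphereMeasure] scatK Φ w := by
  have : ∀ᵐ x ∂ρ, ∀ s, scatK Φ v (x, s) = scatK Φ w (x, s) :=
    (Measure.ae_ae_of_ae_prod h).mono fun x hx s =>
      integral_congr_ae (hx.mono fun y hy => by simp only [hy])
  exact (ae_prod_fst_of_ae this).mono fun p hp => hp p.2

theorem sq_lintegral_enorm_scatK_integrand_le (hΦ : IsSymmetricMarkovDensity sphereMeasure Φ)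
    (hv : Measurable v) (p : E3 × S2) :
    (∫⁻ y, ‖Φ p.2 y * v (p.1, y)‖ₑ ∂sphereMeasure) ^ (2 : ℝ) ≤
      ∫⁻ y, ENNReal.ofReal (Φ p.2 y) * ‖v (p.1, y)‖ₑ ^ (2 : ℝ) ∂sphereMeasure := by
  simp_rw [enorm_mul, Real.enorm_eq_ofReal (hΦ.nonneg _ _)]
  exact sq_lintegral_mul_le_lintegral_mul_sq
    hΦ.measurable.of_uncurry_left.ennreal_ofReal.aemeasurable
    (hv.comp measurable_prodMk_left).enorm.aemeasurable (hΦ.lintegral_ofReal_eq_one _)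

theorem measurable_lintegral_scatK_density (hΦ : Measurable (Function.uncurry Φ))
    {h : E3 × S2 → ℝ≥0∞} (hh : Measurable h) :
    Measurable fun p : E3 × S2 => ∫⁻ y, ENNReal.ofReal (Φ p.2 y) * h (p.1, y) ∂sphereMeasure :=
  ((hΦ.comp (measurable_fst.snd.prodMk measurable_snd)).ennreal_ofReal.mul
    (hh.comp (measurable_fst.fst.prodMk measurable_snd))).lintegral_prod_right'

theorem lintegral_lintegral_scatK_density (hΦ : IsSymmetricMarkovDensity sphereMeasure Φ)
    {h : E3 × S2 → ℝ≥0∞} (hh : Measurable h) :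
    ∫⁻ p, ∫⁻ y, ENNReal.ofReal (Φ p.2 y) * h (p.1, y) ∂sphereMeasure ∂(ρ.prod sphereMeasure) =
      ∫⁻ p, h p ∂(ρ.prod sphereMeasure) := by
  rw [lintegral_prod _ (measurable_lintegral_scatK_density hΦ.measurable hh).aemeasurable,
    lintegral_prod _ hh.aemeasurable]
  exact lintegral_congr fun x => hΦ.lintegral_lintegral_mul (hh.comp measurable_prodMk_left)

theorem eLpNorm_scatK_le (hΦ : IsSymmetricMarkovDensity sphereMeasure Φ)
    (hv : AEStronglyMeasurable v (ρ.prod sphereMeasure)) :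
    eLpNorm (scatK Φ v) 2 (ρ.prod sphereMeasure) ≤ eLpNorm v 2 (ρ.prod sphereMeasure) := by
  rw [eLpNorm_congr_ae (scatK_ae_eq_of_ae_eq hv.ae_eq_mk), eLpNorm_congr_ae hv.ae_eq_mk]
  have hmeas := hv.stronglyMeasurable_mk.measurable
  simp only [eLpNorm_eq_lintegral_rpow_enorm_toReal two_ne_zero ENNReal.ofNat_ne_top,
    ENNReal.toReal_ofNat]
  refine ENNReal.rpow_le_rpow ?_ (by norm_num)
  calc ∫⁻ p, ‖scatK Φ (hv.mk v) p‖ₑ ^ (2 : ℝ) ∂(ρ.prod sphereMeasure)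
      ≤ ∫⁻ p, ∫⁻ y, ENNReal.ofReal (Φ p.2 y) * ‖hv.mk v (p.1, y)‖ₑ ^ (2 : ℝ) ∂sphereMeasure
          ∂(ρ.prod sphereMeasure) := by
        refine lintegral_mono fun p =>
          le_trans ?_ (sq_lintegral_enorm_scatK_integrand_le hΦ hmeas p)
        gcongr
        exact enorm_integral_le_lintegral_enorm _
    _ = _ := lintegral_lintegral_scatK_density hΦ (hmeas.enorm.pow_const _)

theorem memLp_scatK (hΦ : IsSymmetricMarkovDensity sphereMeasure Φ)
    (hv : MemLp v 2 (ρ.prod sphereMeasure)) : MemLp (scatK Φ v) 2 (ρ.prod sphereMeasure) :=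
  ⟨(measurable_scatK hΦ.measurable hv.1.stronglyMeasurable_mk.measurable).aestronglyMeasurable
    |>.congr (scatK_ae_eq_of_ae_eq hv.1.ae_eq_mk).symm,
    (eLpNorm_scatK_le hΦ hv.1).trans_lt hv.2⟩

theorem ae_integrable_scatK_integrand (hΦ : IsSymmetricMarkovDensity sphereMeasure Φ)
    (hv : Measurable v) (hv2 : MemLp v 2 (ρ.prod sphereMeasure)) :
    ∀ᵐ p ∂(ρ.prod sphereMeasure), Integrable (fun y => Φ p.2 y * v (p.1, y)) sphereMeasure := by
  have hfin : ∀ᵐ p ∂(ρ.prod sphereMeasure),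
      ∫⁻ y, ENNReal.ofReal (Φ p.2 y) * ‖v (p.1, y)‖ₑ ^ (2 : ℝ) ∂sphereMeasure < ∞ := by
    have hv2' := hv.enorm.pow_const (2 : ℝ)
    refine ae_lt_top (measurable_lintegral_scatK_density hΦ.measurable hv2') ?_
    rw [lintegral_lintegral_scatK_density hΦ hv2']
    exact (lintegral_rpow_enorm_lt_top_of_eLpNorm_lt_top two_ne_zero ENNReal.ofNat_ne_top hv2.2).ne
  filter_upwards [hfin] with p hp
  refine ⟨(hΦ.measurable.of_uncurry_left.mul (hv.comp measurable_prodMk_left)).aestronglyMeasurable,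
    ?_⟩
  exact (ENNReal.rpow_lt_top_iff_of_pos two_pos).mp
    ((sq_lintegral_enorm_scatK_integrand_le hΦ hv p).trans_lt hp)

-- The Bochner integral in `scatK` is `0` on non-integrable slices, hence the detour through
-- `ae_integrable_scatK_integrand`.
theorem scatK_sub_ae_eq (hΦ : IsSymmetricMarkovDensity sphereMeasure Φ)
    (hv : MemLp v 2 (ρ.prod sphereMeasure)) (hw : MemLp w 2 (ρ.prod sphereMeasure)) :
    scatK Φ (v - w) =ᵐ[ρ.prod sphereMeasure] scatK Φ v - scatK Φ w := by
  have hv' := hv.ae_eq hv.1.ae_eq_mk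
  have hw' := hw.ae_eq hw.1.ae_eq_mk
  have hsub : scatK Φ (hv.1.mk v - hw.1.mk w) =ᵐ[ρ.prod sphereMeasure]
      scatK Φ (hv.1.mk v) - scatK Φ (hw.1.mk w) := by
    filter_upwards [ae_integrable_scatK_integrand hΦ hv.1.stronglyMeasurable_mk.measurable hv',
      ae_integrable_scatK_integrand hΦ hw.1.stronglyMeasurable_mk.measurable hw'] with p hvp hwp
    simp only [scatK, Pi.sub_apply, mul_sub]
    exact integral_sub hvp hwp
  calc scatK Φ (v - w) =ᵐ[ρ.prod sphereMeasure] scatK Φ (hv.1.mk v - hw.1.mk w) :=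
        scatK_ae_eq_of_ae_eq (hv.1.ae_eq_mk.sub hw.1.ae_eq_mk)
    _ =ᵐ[ρ.prod sphereMeasure] scatK Φ (hv.1.mk v) - scatK Φ (hw.1.mk w) := hsub
    _ =ᵐ[ρ.prod sphereMeasure] scatK Φ v - scatK Φ w :=
        (scatK_ae_eq_of_ae_eq hv.1.ae_eq_mk.symm).sub (scatK_ae_eq_of_ae_eq hw.1.ae_eq_mk.symm)

end Scattering

section ImplicitEuler

def implicitEulerMap (Φ : S2 → S2 → ℝ) (σa σs : E3 → ℝ) (Δt : ℝ) (g v : E3 × S2 → ℝ) :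
    E3 × S2 → ℝ :=
  fun p => (g p + Δt * σs p.1 * scatK Φ v p) / (1 + Δt * (σa p.1 + σs p.1))

variable {Φ : S2 → S2 → ℝ} {σa σs : E3 → ℝ} {Δt σs_hi : ℝ} {ρ : Measure E3}
  {g u v : E3 × S2 → ℝ}

theorem implicitEulerMap_eq_self_iff {p : E3 × S2} (hp : 1 + Δt * (σa p.1 + σs p.1) ≠ 0) :
    implicitEulerMap Φ σa σs Δt g v p = v p ↔ v p + Δt * removalK Φ σa σs v p = g p := by
  rw [implicitEulerMap, div_eq_iff hp, removalK]
  constructor <;> intro h <;> linear_combination -h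

theorem implicitEulerMap_ae_eq_self_iff (hΔt : 0 ≤ Δt) (hσa : ∀ᵐ x ∂ρ, 0 ≤ σa x)
    (hσs : ∀ᵐ x ∂ρ, 0 ≤ σs x) :
    implicitEulerMap Φ σa σs Δt g v =ᵐ[ρ.prod sphereMeasure] v ↔
      ∀ᵐ p ∂(ρ.prod sphereMeasure), v p + Δt * removalK Φ σa σs v p = g p := by
  have hm : ∀ᵐ p ∂(ρ.prod sphereMeasure), 1 + Δt * (σa p.1 + σs p.1) ≠ 0 :=
    ae_prod_fst_of_ae <| (hσa.and hσs).mono fun x hx =>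
      (show 0 < 1 + Δt * (σa x + σs x) by nlinarith [mul_nonneg hΔt hx.1, mul_nonneg hΔt hx.2]).ne'
  exact ⟨fun h => (h.and hm).mono fun p hp => (implicitEulerMap_eq_self_iff hp.2).1 hp.1,
    fun h => (h.and hm).mono fun p hp => (implicitEulerMap_eq_self_iff hp.2).2 hp.1⟩

theorem memLp_implicitEulerMap (hΦ : IsSymmetricMarkovDensity sphereMeasure Φ)
    (hσa_meas : Measurable σa) (hσs_meas : Measurable σs) (hΔt : 0 ≤ Δt)
    (hσa : ∀ᵐ x ∂ρ, 0 ≤ σa x) (hσs : ∀ᵐ x ∂ρ, 0 ≤ σs x)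
    (hg : MemLp g 2 (ρ.prod sphereMeasure)) (hv : MemLp v 2 (ρ.prod sphereMeasure)) :
    MemLp (implicitEulerMap Φ σa σs Δt g v) 2 (ρ.prod sphereMeasure) := by
  have hKv := memLp_scatK hΦ hv
  refine (hg.norm.add hKv.norm).of_le ?_ ?_
  · have hc : Measurable fun p : E3 × S2 => Δt * σs p.1 := by fun_prop
    have hm : Measurable fun p : E3 × S2 => 1 + Δt * (σa p.1 + σs p.1) := by fun_prop
    exact ((hg.1.aemeasurable.add (hc.aemeasurable.mul hKv.1.aemeasurable)).div
      hm.aemeasurable).aestronglyMeasurable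
  · filter_upwards [ae_prod_fst_of_ae (hσa.and hσs)] with p hp
    simp only [Pi.add_apply, Real.norm_eq_abs]
    exact (abs_add_mul_div_one_add_le hΔt hp.1 hp.2).trans (le_abs_self _)

theorem eLpNorm_implicitEulerMap_sub_le (hΦ : IsSymmetricMarkovDensity sphereMeasure Φ)
    (hΔt : 0 ≤ Δt) (hσa : ∀ᵐ x ∂ρ, 0 ≤ σa x) (hσs : ∀ᵐ x ∂ρ, 0 ≤ σs x ∧ σs x ≤ σs_hi)
    (hu : MemLp u 2 (ρ.prod sphereMeasure)) (hv : MemLp v 2 (ρ.prod sphereMeasure)) :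
    eLpNorm (implicitEulerMap Φ σa σs Δt g u - implicitEulerMap Φ σa σs Δt g v) 2
        (ρ.prod sphereMeasure) ≤
      Real.toNNReal (Δt * σs_hi / (1 + Δt * σs_hi)) * eLpNorm (u - v) 2 (ρ.prod sphereMeasure) := by
  set q := Real.toNNReal (Δt * σs_hi / (1 + Δt * σs_hi))
  have hpt : ∀ᵐ p ∂(ρ.prod sphereMeasure), ‖(implicitEulerMap Φ σa σs Δt g u -
      implicitEulerMap Φ σa σs Δt g v) p‖ ≤ q * ‖scatK Φ (u - v) p‖ := by
    filter_upwards [scatK_sub_ae_eq hΦ hu hv, ae_prod_fst_of_ae (hσa.and hσs)]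
      with p hK ⟨ha, hs, hsS⟩
    have hm : 0 < 1 + Δt * (σa p.1 + σs p.1) := by
      nlinarith [mul_nonneg hΔt ha, mul_nonneg hΔt hs]
    have hdiff : implicitEulerMap Φ σa σs Δt g u p - implicitEulerMap Φ σa σs Δt g v p =
        Δt * σs p.1 / (1 + Δt * (σa p.1 + σs p.1)) * scatK Φ (u - v) p := by
      rw [hK, implicitEulerMap, implicitEulerMap, Pi.sub_apply]
      field_simp
      ring
    rw [Pi.sub_apply, hdiff, norm_mul, Real.norm_of_nonneg (by positivity)]
    exact mul_le_mul_of_nonneg_right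
      ((mul_div_one_add_mul_le hΔt ha hs hsS).trans (Real.le_coe_toNNReal _)) (norm_nonneg _)
  refine (eLpNorm_le_nnreal_smul_eLpNorm_of_ae_le_mul hpt 2).trans ?_
  rw [ENNReal.smul_def, smul_eq_mul]
  gcongr
  exact eLpNorm_scatK_le hΦ (hu.1.sub hv.1)

end ImplicitEuler

theorem implicitEuler_solvable_general
    (Ω : Set E3)
    (Φ : S2 → S2 → ℝ)
    (hΦmeas : Measurable (Function.uncurry Φ))
    (hΦpos : ∀ s s', 0 ≤ Φ s s')
    (hΦsymm : ∀ s s', Φ s s' = Φ s' s)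
    (hΦnorm : ∀ s, (∫ s', Φ s s' ∂sphereMeasure) = 1)
    (σa σs : E3 → ℝ) (hσa_meas : Measurable σa) (hσs_meas : Measurable σs)
    (σa_lo σa_hi σs_hi : ℝ)
    (hσa_lo_pos : 0 < σa_lo) (hσs_hi_pos : 0 < σs_hi)
    (hσs_bound : ∀ᵐ x ∂(volume : Measure E3).restrict Ω, 0 ≤ σs x ∧ σs x ≤ σs_hi)
    (hσa_bound : ∀ᵐ x ∂(volume : Measure E3).restrict Ω, σa_lo ≤ σa x ∧ σa x ≤ σa_hi)
    (Δt : ℝ) (hΔt : 0 ≤ Δt)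
    (g : E3 × S2 → ℝ) (hg : MemLp g 2 (rteMeasure Ω)) :
    ∃ util : E3 × S2 → ℝ, MemLp util 2 (rteMeasure Ω) ∧
      (∀ᵐ p ∂(rteMeasure Ω), util p + Δt * removalK Φ σa σs util p = g p) ∧
      ∀ util' : E3 × S2 → ℝ, MemLp util' 2 (rteMeasure Ω) →
        (∀ᵐ p ∂(rteMeasure Ω), util' p + Δt * removalK Φ σa σs util' p = g p) →
        util' =ᵐ[rteMeasure Ω] util := by
  rw [rteMeasure] at hg ⊢
  have hΦ : IsSymmetricMarkovDensity sphereMeasure Φ := ⟨hΦmeas, hΦpos, hΦsymm, hΦnorm⟩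
  have hσa : ∀ᵐ x ∂(volume : Measure E3).restrict Ω, 0 ≤ σa x :=
    hσa_bound.mono fun x hx => hσa_lo_pos.le.trans hx.1
  have hσs : ∀ᵐ x ∂(volume : Measure E3).restrict Ω, 0 ≤ σs x := hσs_bound.mono fun x hx => hx.1
  have hq : Real.toNNReal (Δt * σs_hi / (1 + Δt * σs_hi)) < 1 := by
    rw [Real.toNNReal_lt_one, div_lt_one (by positivity)]
    linarith
  obtain ⟨u, hu, hTu, huniq⟩ := exists_memLp_ae_fixedPoint_of_contraction hq
    (fun v hv => memLp_implicitEulerMap hΦ hσa_meas hσs_meas hΔt hσa hσs hg hv)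
    (fun v w hv hw => eLpNorm_implicitEulerMap_sub_le hΦ hΔt hσa hσs_bound hv hw)
  have hsolves := fun v => implicitEulerMap_ae_eq_self_iff (Φ := Φ) (g := g) (v := v) hΔt hσa hσs
  exact ⟨u, hu, (hsolves u).1 hTu, fun u' hu' hu'g => huniq u' hu' ((hsolves u').2 hu'g)⟩

/-- solvability of the implicit Euler step: for every `Δt ≥ 0` the
operator `I + Δt K_σ` is a bijection of `L²(Ω × S²)` onto itself: every
`g ∈ L²(Ω × S²)` has a unique (up to a.e. equality) preimage `ũ ∈ L²(Ω × S²)`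
with `ũ + Δt K_σ ũ = g`. -/
theorem implicitEuler_solvable
    (Ω : Set E3) (hΩo : IsOpen Ω) (hΩb : Bornology.IsBounded Ω)
    (Φ : S2 → S2 → ℝ)
    (hΦmeas : Measurable (Function.uncurry Φ))
    (hΦpos : ∀ s s', 0 ≤ Φ s s')
    (hΦsymm : ∀ s s', Φ s s' = Φ s' s)
    (hΦnorm : ∀ s, (∫ s', Φ s s' ∂sphereMeasure) = 1)
    (σa σs : E3 → ℝ) (hσa_meas : Measurable σa) (hσs_meas : Measurable σs)
    (σa_lo σa_hi σs_hi : ℝ)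
    (hσa_lo_pos : 0 < σa_lo) (hσa_hi_pos : 0 < σa_hi) (hσs_hi_pos : 0 < σs_hi)
    (hσs_bound : ∀ᵐ x ∂(volume : Measure E3).restrict Ω, 0 ≤ σs x ∧ σs x ≤ σs_hi)
    (hσa_bound : ∀ᵐ x ∂(volume : Measure E3).restrict Ω, σa_lo ≤ σa x ∧ σa x ≤ σa_hi)
    (Δt : ℝ) (hΔt : 0 ≤ Δt)
    (g : E3 × S2 → ℝ) (hg : MemLp g 2 (rteMeasure Ω)) :
    ∃ util : E3 × S2 → ℝ, MemLp util 2 (rteMeasure Ω) ∧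
      (∀ᵐ p ∂(rteMeasure Ω), util p + Δt * removalK Φ σa σs util p = g p) ∧
      ∀ util' : E3 × S2 → ℝ, MemLp util' 2 (rteMeasure Ω) →
        (∀ᵐ p ∂(rteMeasure Ω), util' p + Δt * removalK Φ σa σs util' p = g p) →
        util' =ᵐ[rteMeasure Ω] util :=
  implicitEuler_solvable_general Ω Φ hΦmeas hΦpos hΦsymm hΦnorm σa σs hσa_meas hσs_meas σa_lo σa_hi
    σs_hi hσa_lo_pos hσs_hi_pos hσs_bound hσa_bound Δt hΔt g hg
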